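/- arXiv:1811.06923 — 5 statements merged into one kernel-verified Lean document; each statement's English description precedes it below -/
import Mathlib

section
/- Let T be a positive operator (or positive measurable function μ(t)) with singular value function μ(t,T) ∼ ψ(t) as t → ∞, where ψ : [0,∞) → (0,∞) is regularly varying of index −1. Then for every q > 0, the heat trace satisfies Tr(e^{−T^{−q}/t}) ∼ Γ(1 + 1/q) · ψ^{−1}(t^{−1/q}) as t → ∞. (In the commutative model: if μ : [0,∞) → (0,∞) is decreasing with μ(t) ∼ ψ(t), then ∫_0^∞ e^{−μ(s)^{−q}/t} ds ∼ Γ(1+1/q) ψ^{−1}(t^{−1/q}) as t → ∞.) -/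
/-!
With `u = t^{-1/q}` and `a = ψ⁻¹(u)`, the substitution `s = a x` turns the heat trace into
`a ∫₀^∞ exp (-(μ(a x)/u)^{-q}) dx`. Regular variation forces `ψ(ψ⁻¹(u)) ∼ u` as `u → 0⁺`,
hence `μ(a x)/u → x⁻¹` pointwise and the integrand tends to `exp (-x^q)`, whose integral is
`Γ(1 + 1/q)`. Dominated convergence applies thanks to the Potter bound `x ψ(a x)² ≤ 2 ψ(a)²`
(`x ≥ 1`, `a` large), obtained by iterating the doubling estimate `2 ψ(2y)² ≤ ψ(y)²` that
follows from `ψ(2y)/ψ(y) → 1/2`.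
-/

open Filter Topology MeasureTheory Set Real

noncomputable def genInv (ψ : ℝ → ℝ) (u : ℝ) : ℝ :=
  sInf {t : ℝ | 0 ≤ t ∧ ψ t ≤ u}

section Potter

variable {ψ : ℝ → ℝ}

lemma eventually_two_mul_sq_apply_two_mul_le (hpos : ∀ t, 0 ≤ t → 0 < ψ t)
    (hrv : Tendsto (fun t => ψ (2 * t) / ψ t) atTop (𝓝 2⁻¹)) :
    ∀ᶠ y in atTop, 2 * ψ (2 * y) ^ 2 ≤ ψ y ^ 2 := by
  filter_upwards [hrv.eventually (eventually_le_nhds (by norm_num : (2 : ℝ)⁻¹ < 2 / 3)),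
    eventually_ge_atTop 0] with y hratio hy
  have hψy := hpos y hy
  have hψ2y := hpos (2 * y) (by positivity)
  rw [div_le_iff₀ hψy] at hratio
  nlinarith

lemma exists_potter_bound (hpos : ∀ t, 0 ≤ t → 0 < ψ t) (hdec : AntitoneOn ψ (Ici 0))
    (hrv : Tendsto (fun t => ψ (2 * t) / ψ t) atTop (𝓝 2⁻¹)) :
    ∃ Y, 0 ≤ Y ∧ ∀ a, Y ≤ a → ∀ x, 1 ≤ x → x * ψ (a * x) ^ 2 ≤ 2 * ψ a ^ 2 := by
  obtain ⟨Y, hY⟩ := eventually_atTop.1 <|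
    (eventually_two_mul_sq_apply_two_mul_le hpos hrv).and (eventually_ge_atTop 0)
  refine ⟨Y, (hY Y le_rfl).2, fun a ha x hx => ?_⟩
  have ha0 : 0 ≤ a := (hY Y le_rfl).2.trans ha
  have hbase (x : ℝ) (hx1 : 1 ≤ x) (hx2 : x ≤ 2) : x * ψ (a * x) ^ 2 ≤ 2 * ψ a ^ 2 := by
    have hle : ψ (a * x) ≤ ψ a := hdec ha0 (by positivity : (0 : ℝ) ≤ a * x) (by nlinarith)
    have := hpos (a * x) (by positivity)
    nlinarith
  suffices ∀ k : ℕ, ∀ x, 1 ≤ x → x ≤ 2 ^ k → x * ψ (a * x) ^ 2 ≤ 2 * ψ a ^ 2 by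
    obtain ⟨k, hk⟩ := pow_unbounded_of_one_lt x one_lt_two
    exact this k x hx hk.le
  intro k
  induction k with
  | zero => exact fun x hx1 hx2 => hbase x hx1 (by linarith [pow_zero (2 : ℝ)])
  | succ k ih =>
    intro x hx1 hx2
    rcases le_or_gt x 2 with hx2' | hx2'
    · exact hbase x hx1 hx2'
    have hhalf := ih (x / 2) (by linarith) (by rw [pow_succ] at hx2; linarith)
    have hdbl := (hY (a * (x / 2)) (by nlinarith)).1
    rw [show a * x = 2 * (a * (x / 2)) by ring]
    nlinarith

lemma exists_apply_le (hpos : ∀ t, 0 ≤ t → 0 < ψ t) (hdec : AntitoneOn ψ (Ici 0))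
    (hrv : Tendsto (fun t => ψ (2 * t) / ψ t) atTop (𝓝 2⁻¹)) :
    ∀ u, 0 < u → ∃ s, 0 ≤ s ∧ ψ s ≤ u := by
  intro u hu
  obtain ⟨Y, hY, hpotter⟩ := exists_potter_bound hpos hdec hrv
  set x := 2 * ψ Y ^ 2 / u ^ 2 + 1
  have hx : 2 * ψ Y ^ 2 < x * u ^ 2 := by
    have : x * u ^ 2 = 2 * ψ Y ^ 2 + u ^ 2 := by simp only [x]; field_simp
    rw [this]; linarith [pow_pos hu 2]
  have hx1 : 1 ≤ x := by simp only [x]; linarith [show 0 ≤ 2 * ψ Y ^ 2 / u ^ 2 by positivity]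
  refine ⟨Y * x, by positivity, ?_⟩
  have h := hpotter Y le_rfl x hx1
  have : ψ (Y * x) ^ 2 < u ^ 2 := lt_of_mul_lt_mul_left (h.trans_lt hx) (by linarith)
  exact (pow_lt_pow_iff_left₀ (hpos _ (by positivity)).le hu.le two_ne_zero).1 this |>.le

end Potter

section GenInv

variable {ψ : ℝ → ℝ} {u s : ℝ}

lemma apply_le_of_genInv_lt (hdec : AntitoneOn ψ (Ici 0)) (hne : ∃ s, 0 ≤ s ∧ ψ s ≤ u)
    (h : genInv ψ u < s) : ψ s ≤ u := by
  obtain ⟨s', ⟨hs'0, hs'u⟩, hs's⟩ := exists_lt_of_csInf_lt hne h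
  exact (hdec hs'0 (hs'0.trans hs's.le) hs's.le).trans hs'u

lemma lt_apply_of_lt_genInv (hs : 0 ≤ s) (h : s < genInv ψ u) : u < ψ s := by
  by_contra! hle
  exact h.not_ge (csInf_le ⟨0, fun _ ht => ht.1⟩ ⟨hs, hle⟩)

lemma tendsto_genInv (hpos : ∀ t, 0 ≤ t → 0 < ψ t) (hdec : AntitoneOn ψ (Ici 0))
    (hne : ∀ u, 0 < u → ∃ s, 0 ≤ s ∧ ψ s ≤ u) :
    Tendsto (genInv ψ) (𝓝[>] 0) atTop := by
  refine tendsto_atTop.2 fun T => ?_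
  have hT : 0 < ψ (max T 0) := hpos _ (le_max_right _ _)
  filter_upwards [nhdsWithin_le_nhds (eventually_lt_nhds hT), self_mem_nhdsWithin]
    with u hu (hu0 : 0 < u)
  refine (le_max_left T 0).trans (le_csInf (hne u hu0) fun t ⟨ht0, htu⟩ => ?_)
  by_contra! hlt
  exact (htu.trans_lt hu).not_ge (hdec ht0 (le_max_right T 0) hlt.le)

lemma tendsto_apply_genInv_div (hpos : ∀ t, 0 ≤ t → 0 < ψ t) (hdec : AntitoneOn ψ (Ici 0))
    (hrv : ∀ l, 0 < l → Tendsto (fun t => ψ (l * t) / ψ t) atTop (𝓝 l⁻¹))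
    (hne : ∀ u, 0 < u → ∃ s, 0 ≤ s ∧ ψ s ≤ u) :
    Tendsto (fun u => ψ (genInv ψ u) / u) (𝓝[>] 0) (𝓝 1) := by
  have hA := tendsto_genInv hpos hdec hne
  have hratio : ∀ l, 0 < l →
      Tendsto (fun u => ψ (genInv ψ u) / ψ (l * genInv ψ u)) (𝓝[>] 0) (𝓝 l) := fun l hl => by
    simpa using ((hrv l hl).comp hA).inv₀ (inv_ne_zero hl.ne')
  have hApos : ∀ᶠ u in 𝓝[>] (0 : ℝ), 0 < genInv ψ u := hA.eventually_gt_atTop 0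
  -- squeeze: `ψ (l * a) ≤ u < ψ (m * a)` for `a = genInv ψ u` and `m < 1 < l`
  refine tendsto_order.2 ⟨fun b hb => ?_, fun b hb => ?_⟩
  · obtain ⟨m, hbm, hm1⟩ := exists_between (max_lt hb one_half_lt_one)
    have hm0 : 0 < m := one_half_pos.trans_le ((le_max_right _ _).trans hbm.le)
    filter_upwards
      [(hratio m hm0).eventually (eventually_gt_nhds ((le_max_left _ _).trans_lt hbm)), hApos,
        self_mem_nhdsWithin] with u hb' ha (hu : 0 < u)
    have hu' : u < ψ (m * genInv ψ u) := lt_apply_of_lt_genInv (by positivity) (by nlinarith)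
    exact hb'.trans_le (div_le_div_of_nonneg_left (hpos _ ha.le).le hu hu'.le)
  · obtain ⟨l, hl1, hlb⟩ := exists_between hb
    filter_upwards [(hratio l (by linarith)).eventually (eventually_lt_nhds hlb),
      hApos, self_mem_nhdsWithin] with u hb' ha (hu : 0 < u)
    have hu' : ψ (l * genInv ψ u) ≤ u := apply_le_of_genInv_lt hdec (hne u hu) (by nlinarith)
    exact (div_le_div_of_nonneg_left (hpos _ ha.le).le (hpos _ (by positivity)) hu').trans_lt
      hb'

end GenInv

lemma mul_rpow_le_rpow_neg_of_mul_sq_le {v x C q : ℝ} (hv : 0 < v) (hx : 0 < x) (hq : 0 ≤ q)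
    (h : x * v ^ 2 ≤ C) : C ^ (-(q / 2)) * x ^ (q / 2) ≤ v ^ (-q) := by
  have hC : 0 < C := by have := mul_pos hx (pow_pos hv 2); linarith
  have hlhs : C ^ (-(q / 2)) * x ^ (q / 2) = (C / x) ^ (-(q / 2)) := by
    rw [div_rpow hC.le hx.le, rpow_neg hx.le, div_inv_eq_mul]
  have hrhs : v ^ (-q) = (v ^ 2) ^ (-(q / 2)) := by
    rw [← rpow_natCast, ← rpow_mul hv.le]; congr 1; push_cast; ring
  rw [hlhs, hrhs]
  exact rpow_le_rpow_of_nonpos (by positivity) (by rw [le_div_iff₀ hx]; linarith)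
    (by linarith)

section Rescaling

variable {ψ μ : ℝ → ℝ}

lemma tendsto_apply_genInv_mul_div (hpos : ∀ t, 0 ≤ t → 0 < ψ t)
    (hdec : AntitoneOn ψ (Ici 0))
    (hrv : ∀ l, 0 < l → Tendsto (fun t => ψ (l * t) / ψ t) atTop (𝓝 l⁻¹))
    (hμ : Tendsto (fun t => μ t / ψ t) atTop (𝓝 1)) {x : ℝ} (hx : 0 < x) :
    Tendsto (fun u => μ (genInv ψ u * x) / u) (𝓝[>] 0) (𝓝 x⁻¹) := by
  have hne := exists_apply_le hpos hdec (hrv 2 two_pos)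
  have hA := tendsto_genInv hpos hdec hne
  have h := ((hμ.comp (hA.atTop_mul_const hx)).mul ((hrv x hx).comp hA)).mul
    (tendsto_apply_genInv_div hpos hdec hrv hne)
  rw [one_mul, mul_one] at h
  refine h.congr' ?_
  filter_upwards [hA.eventually_ge_atTop 0, self_mem_nhdsWithin] with u ha (hu : 0 < u)
  have := hpos (genInv ψ u * x) (by positivity)
  have := hpos (genInv ψ u) ha
  simp only [Function.comp_apply, mul_comm x]
  field_simp

lemma eventually_mul_sq_apply_genInv_mul_div_le (hpos : ∀ t, 0 ≤ t → 0 < ψ t)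
    (hdec : AntitoneOn ψ (Ici 0))
    (hrv : ∀ l, 0 < l → Tendsto (fun t => ψ (l * t) / ψ t) atTop (𝓝 l⁻¹))
    (hμpos : ∀ t, 0 ≤ t → 0 < μ t) (hμ : Tendsto (fun t => μ t / ψ t) atTop (𝓝 1)) :
    ∀ᶠ u in 𝓝[>] 0, ∀ x, 1 ≤ x → x * (μ (genInv ψ u * x) / u) ^ 2 ≤ 32 := by
  have hne := exists_apply_le hpos hdec (hrv 2 two_pos)
  obtain ⟨Y, hY0, hpotter⟩ := exists_potter_bound hpos hdec (hrv 2 two_pos)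
  obtain ⟨M, hM⟩ := eventually_atTop.1 <|
    (hμ.eventually (eventually_le_nhds one_lt_two)).and (eventually_ge_atTop 0)
  filter_upwards [(tendsto_genInv hpos hdec hne).eventually_ge_atTop (max Y M),
    (tendsto_apply_genInv_div hpos hdec hrv hne).eventually (eventually_le_nhds one_lt_two),
    self_mem_nhdsWithin] with u ha hψu (hu : 0 < u) x hx1
  have hM0 : 0 ≤ M := (hM M le_rfl).2
  have ha0 : 0 ≤ genInv ψ u := hY0.trans ((le_max_left _ _).trans ha)
  have hμψ := (hM _ (by nlinarith [le_max_right Y M] : M ≤ genInv ψ u * x)).1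
  rw [div_le_iff₀ (hpos _ (by positivity))] at hμψ
  rw [div_le_iff₀ hu] at hψu
  have hpot := hpotter _ ((le_max_left _ _).trans ha) x hx1
  rw [div_pow, mul_div_assoc', div_le_iff₀ (by positivity)]
  calc x * μ (genInv ψ u * x) ^ 2 ≤ x * (2 * ψ (genInv ψ u * x)) ^ 2 := by
        gcongr; exact (hμpos _ (by positivity)).le
    _ = 4 * (x * ψ (genInv ψ u * x) ^ 2) := by ring
    _ ≤ 4 * (2 * ψ (genInv ψ u) ^ 2) := by gcongr
    _ ≤ 4 * (2 * (2 * u) ^ 2) := by gcongr; exact (hpos _ ha0).le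
    _ = 32 * u ^ 2 := by ring

lemma eventually_exp_neg_rpow_le {q : ℝ} (hq : 0 < q) (hpos : ∀ t, 0 ≤ t → 0 < ψ t)
    (hdec : AntitoneOn ψ (Ici 0))
    (hrv : ∀ l, 0 < l → Tendsto (fun t => ψ (l * t) / ψ t) atTop (𝓝 l⁻¹))
    (hμpos : ∀ t, 0 ≤ t → 0 < μ t) (hμ : Tendsto (fun t => μ t / ψ t) atTop (𝓝 1)) :
    ∀ᶠ u in 𝓝[>] 0, ∀ x, 0 < x → exp (-(μ (genInv ψ u * x) / u) ^ (-q)) ≤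
      exp (32 ^ (-(q / 2))) * exp (-32 ^ (-(q / 2)) * x ^ (q / 2)) := by
  have hne := exists_apply_le hpos hdec (hrv 2 two_pos)
  filter_upwards [eventually_mul_sq_apply_genInv_mul_div_le hpos hdec hrv hμpos hμ,
    (tendsto_genInv hpos hdec hne).eventually_ge_atTop 0, self_mem_nhdsWithin]
    with u hsq ha (hu : 0 < u) x hx
  have hv : 0 < μ (genInv ψ u * x) / u := div_pos (hμpos _ (by positivity)) hu
  have hb : (0 : ℝ) < 32 ^ (-(q / 2)) := by positivity
  rw [← exp_add, exp_le_exp]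
  rcases lt_or_ge x 1 with hx1 | hx1
  · have : x ^ (q / 2) ≤ 1 := rpow_le_one hx.le hx1.le (by positivity)
    have : 0 ≤ (μ (genInv ψ u * x) / u) ^ (-q) := rpow_nonneg hv.le _
    nlinarith
  · have := mul_rpow_le_rpow_neg_of_mul_sq_le hv hx hq.le (hsq x hx1)
    linarith

theorem tendsto_integral_exp_neg_rescaled {q : ℝ} (hq : 0 < q)
    (hpos : ∀ t, 0 ≤ t → 0 < ψ t) (hdec : AntitoneOn ψ (Ici 0))
    (hrv : ∀ l, 0 < l → Tendsto (fun t => ψ (l * t) / ψ t) atTop (𝓝 l⁻¹))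
    (hμpos : ∀ t, 0 ≤ t → 0 < μ t) (hμmeas : Measurable μ)
    (hμ : Tendsto (fun t => μ t / ψ t) atTop (𝓝 1)) :
    Tendsto (fun u => ∫ x in Ioi 0, exp (-(μ (genInv ψ u * x) / u) ^ (-q)))
      (𝓝[>] 0) (𝓝 (Gamma (1 + 1 / q))) := by
  rw [add_comm, ← integral_exp_neg_rpow hq]
  refine tendsto_integral_filter_of_dominated_convergence
    (fun x => exp (32 ^ (-(q / 2))) * exp (-32 ^ (-(q / 2)) * x ^ (q / 2)))
    (Eventually.of_forall fun u => (by fun_prop : Measurable _).aestronglyMeasurable) ?_ ?_ ?_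
  · filter_upwards [eventually_exp_neg_rpow_le hq hpos hdec hrv hμpos hμ] with u hu
    refine (ae_restrict_iff' measurableSet_Ioi).2 (Eventually.of_forall fun x hx => ?_)
    rw [norm_of_nonneg (exp_pos _).le]
    exact hu x hx
  · simpa using (integrableOn_rpow_mul_exp_neg_mul_rpow (s := 0) neg_one_lt_zero
      (by positivity : 0 < q / 2) (by positivity : (0 : ℝ) < 32 ^ (-(q / 2)))).const_mul
      (exp (32 ^ (-(q / 2))))
  · refine (ae_restrict_iff' measurableSet_Ioi).2 (Eventually.of_forall fun x (hx : 0 < x) => ?_)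
    have hcont : ContinuousAt (fun v : ℝ => exp (-v ^ (-q))) x⁻¹ :=
      ((continuousAt_rpow_const _ _ (Or.inl (inv_ne_zero hx.ne'))).neg).rexp
    have h := hcont.tendsto.comp (tendsto_apply_genInv_mul_div hpos hdec hrv hμ hx)
    rwa [inv_rpow hx.le, rpow_neg hx.le, inv_inv] at h

theorem tendsto_integral_exp_neg_div_genInv {q : ℝ} (hq : 0 < q)
    (hpos : ∀ t, 0 ≤ t → 0 < ψ t) (hdec : AntitoneOn ψ (Ici 0))
    (hrv : ∀ l, 0 < l → Tendsto (fun t => ψ (l * t) / ψ t) atTop (𝓝 l⁻¹))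
    (hμpos : ∀ t, 0 ≤ t → 0 < μ t) (hμmeas : Measurable μ)
    (hμ : Tendsto (fun t => μ t / ψ t) atTop (𝓝 1)) :
    Tendsto (fun u => (∫ s in Ioi 0, exp (-(μ s / u) ^ (-q))) /
      (Gamma (1 + 1 / q) * genInv ψ u)) (𝓝[>] 0) (𝓝 1) := by
  have hΓ : Gamma (1 + 1 / q) ≠ 0 := (Gamma_pos_of_pos (by positivity)).ne'
  have h := (tendsto_integral_exp_neg_rescaled hq hpos hdec hrv hμpos hμmeas hμ).div_const
    (Gamma (1 + 1 / q))
  rw [div_self hΓ] at h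
  have hne := exists_apply_le hpos hdec (hrv 2 two_pos)
  refine h.congr' ?_
  filter_upwards [(tendsto_genInv hpos hdec hne).eventually_gt_atTop 0] with u ha
  rw [integral_comp_mul_left_Ioi (fun s => exp (-(μ s / u) ^ (-q))) 0 ha, mul_zero,
    smul_eq_mul]
  field_simp

end Rescaling

theorem stmt5_general (ψ μ : ℝ → ℝ) (q : ℝ) (hq : 0 < q)
    (hψpos : ∀ t : ℝ, 0 ≤ t → 0 < ψ t)
    (hψdec : AntitoneOn ψ (Set.Ici 0))
    (hrv : ∀ l : ℝ, 0 < l →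
      Tendsto (fun t : ℝ => ψ (l * t) / ψ t) atTop (𝓝 l⁻¹))
    (hμpos : ∀ t : ℝ, 0 ≤ t → 0 < μ t)
    (hμmeas : Measurable μ)
    (hequiv : Tendsto (fun t : ℝ => μ t / ψ t) atTop (𝓝 1))
    (ψinv : ℝ → ℝ)
    (hinv : ∀ u : ℝ, 0 < u → ψinv u = sInf {t : ℝ | 0 ≤ t ∧ ψ t ≤ u}) :
    Tendsto (fun t : ℝ =>
        (∫ s in Set.Ioi (0 : ℝ), Real.exp (-((μ s) ^ (-q)) / t)) /
          (Real.Gamma (1 + 1 / q) * ψinv (t ^ (-(1 / q)))))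
      atTop (𝓝 1) := by
  have hu : Tendsto (fun t : ℝ => t ^ (-(1 / q))) atTop (𝓝[>] 0) :=
    tendsto_nhdsWithin_iff.2 ⟨tendsto_rpow_neg_atTop (by positivity),
      (eventually_gt_atTop 0).mono fun t ht => rpow_pos_of_pos ht _⟩
  refine ((tendsto_integral_exp_neg_div_genInv hq hψpos hψdec hrv hμpos hμmeas hequiv).comp
    hu).congr' ?_
  filter_upwards [eventually_gt_atTop 0] with t ht
  have hut : 0 < t ^ (-(1 / q)) := rpow_pos_of_pos ht _
  rw [Function.comp_apply, hinv _ hut, genInv]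
  congr 1
  refine setIntegral_congr_fun measurableSet_Ioi fun s (hs : 0 < s) => ?_
  rw [div_rpow (hμpos s hs.le).le hut.le, ← rpow_mul ht.le,
    show -(1 / q) * -q = 1 by field_simp, rpow_one, neg_div]

/-- Commutative model of the heat-trace asymptotics: if `μ` is a decreasing positive
(singular value) function with `μ(t) ∼ ψ(t)` for a function `ψ` regularly varying of
index `−1` and with generalized inverse `ψinv`, then for every `q > 0`,
`∫_0^∞ e^{−μ(s)^{−q}/t} ds ∼ Γ(1 + 1/q) ψinv(t^{−1/q})` as `t → ∞`. -/
theorem stmt5 (ψ μ : ℝ → ℝ) (q : ℝ) (hq : 0 < q)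
    (hψpos : ∀ t : ℝ, 0 ≤ t → 0 < ψ t)
    (hψdec : AntitoneOn ψ (Set.Ici 0))
    (hrv : ∀ l : ℝ, 0 < l →
      Tendsto (fun t : ℝ => ψ (l * t) / ψ t) atTop (𝓝 l⁻¹))
    (hμpos : ∀ t : ℝ, 0 ≤ t → 0 < μ t)
    (hμdec : AntitoneOn μ (Set.Ici 0))
    (hμmeas : Measurable μ)
    (hequiv : Tendsto (fun t : ℝ => μ t / ψ t) atTop (𝓝 1))
    (ψinv : ℝ → ℝ)
    (hinv : ∀ u : ℝ, 0 < u → ψinv u = sInf {t : ℝ | 0 ≤ t ∧ ψ t ≤ u}) :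
    Tendsto (fun t : ℝ =>
        (∫ s in Set.Ioi (0 : ℝ), Real.exp (-((μ s) ^ (-q)) / t)) /
          (Real.Gamma (1 + 1 / q) * ψinv (t ^ (-(1 / q)))))
      atTop (𝓝 1) :=
  stmt5_general ψ μ q hq hψpos hψdec hrv hμpos hμmeas hequiv ψinv hinv
end

section
/- Let A be a unital C*-algebra, E an A-A-correspondence finitely generated projective from the right, and τ a tracial state on A satisfying the Laca-Neshveyev condition Tr^E_τ = e^α τ for some α ≥ 0. Then for every n ≥ 0, τ_*(E^{⊗n}) = e^{αn}, where τ_*(E^{⊗n}) = Σ_{|σ|=n} τ((e_σ|e_σ)_A) is the τ-dimension of the n-th tensor power computed from an induced frame. Consequently Σ_{n=0}^∞ τ_*(E^{⊗n}) e^{−tn} = 1/(1 − e^{α−t}) for t > α, and this sum diverges as t ↓ α, so τ is critical with critical value β(E,τ) = α. -/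
open Filter Topology

/-- The iterated inner product `(e_σ | a e_σ)_A` for a multi-index `σ` of length `n`. -/
def tensorInnerFold {A : Type*} {N : ℕ} (ip : Fin N → A → A) :
    (n : ℕ) → (Fin n → Fin N) → A → A
  | 0, _, a => a
  | n + 1, σ, a => tensorInnerFold ip n (Fin.tail σ) (ip (σ 0) a)

lemma stmt11_aux {A : Type*} [Ring A] [StarRing A] [Algebra ℂ A] {N : ℕ}
    (ip : Fin N → A →ₗ[ℂ] A) (α : ℝ)
    (τ : A →ₗ[ℂ] ℂ)
    (hLN : ∀ a : A, (∑ j, τ (ip j a)) = Real.exp α * τ a) :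
    ∀ (n : ℕ) (a : A),
      (∑ σ : Fin n → Fin N, τ (tensorInnerFold (fun j x => ip j x) n σ a))
        = (Real.exp α : ℂ) ^ n * τ a := by
  intro n
  induction n with
  | zero =>
    intro a
    simp [tensorInnerFold]
  | succ n ih =>
    intro a
    rw [← Equiv.sum_comp (Fin.consEquiv (fun _ : Fin (n + 1) => Fin N))
      (fun σ => τ (tensorInnerFold (fun j x => ip j x) (n + 1) σ a))]
    rw [Fintype.sum_prod_type]
    have : ∀ (j : Fin N) (σ' : Fin n → Fin N),
        tensorInnerFold (fun j x => ip j x) (n + 1)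
          ((Fin.consEquiv (fun _ : Fin (n + 1) => Fin N)) (j, σ')) a
          = tensorInnerFold (fun j x => ip j x) n σ' (ip j a) := by
      intro j σ'
      simp [tensorInnerFold, Fin.consEquiv, Fin.tail_cons]
    simp_rw [this, ih]
    rw [← Finset.mul_sum, hLN, pow_succ]
    push_cast
    ring

/-- If `τ` is a tracial state satisfying the Laca–Neshveyev condition
`Tr^E_τ(a) = e^α τ(a)` then `τ_*(E^{⊗n}) = Σ_{|σ|=n} τ((e_σ|e_σ)_A) = e^{αn}` for all `n`,
hence `Σ_n τ_*(E^{⊗n}) e^{−tn} = 1/(1 − e^{α−t})` for `t > α`; this diverges as `t ↓ α`,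
so `τ` is critical with critical value `β(E,τ) = α`. -/
theorem stmt11 {A : Type*} [Ring A] [StarRing A] [Algebra ℂ A] {N : ℕ}
    (ip : Fin N → A →ₗ[ℂ] A) (α : ℝ) (hα : 0 ≤ α)
    (τ : A →ₗ[ℂ] ℂ) (hstate : τ 1 = 1)
    (hτtrace : ∀ a b : A, τ (a * b) = τ (b * a))
    (hτpos : ∀ a : A, 0 ≤ (τ (star a * a)).re)
    (hLN : ∀ a : A, (∑ j, τ (ip j a)) = Real.exp α * τ a) :
    (∀ n : ℕ,
      (∑ σ : Fin n → Fin N, τ (tensorInnerFold (fun j x => ip j x) n σ 1))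
        = (Real.exp (α * n) : ℂ)) ∧
    (∀ t : ℝ, α < t →
      (∑' n : ℕ, Real.exp (α * n) * Real.exp (-t * n)) = 1 / (1 - Real.exp (α - t))) ∧
    Tendsto (fun t : ℝ => ∑' n : ℕ, Real.exp (α * n) * Real.exp (-t * n))
      (𝓝[>] α) atTop ∧
    sInf {t : ℝ | 0 ≤ t ∧ Summable (fun n : ℕ => Real.exp (α * n) * Real.exp (-t * n))}
      = α := by
  have key : ∀ (t : ℝ) (n : ℕ),
      Real.exp (α * n) * Real.exp (-t * n) = Real.exp (α - t) ^ n := by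
    intro t n
    rw [← Real.exp_add, ← Real.exp_nat_mul]
    ring_nf
  refine ⟨?_, ?_, ?_, ?_⟩
  · intro n
    rw [stmt11_aux ip α τ hLN n 1, hstate, mul_one, mul_comm, Real.exp_nat_mul]
    push_cast
    ring
  · intro t ht
    have hr1 : Real.exp (α - t) < 1 := Real.exp_lt_one_iff.2 (by linarith)
    have hr0 : 0 ≤ Real.exp (α - t) := Real.exp_nonneg _
    simp_rw [key t]
    rw [tsum_geometric_of_lt_one hr0 hr1, one_div]
  · have h1 : Tendsto (fun t : ℝ => 1 - Real.exp (α - t)) (𝓝[>] α) (𝓝[>] 0) := by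
      apply tendsto_nhdsWithin_of_tendsto_nhds_of_eventually_within
      · have : Tendsto (fun t : ℝ => 1 - Real.exp (α - t)) (𝓝 α) (𝓝 (1 - Real.exp (α - α))) :=
          (continuous_const.sub
            (Real.continuous_exp.comp (continuous_const.sub continuous_id))).tendsto α
        simpa using this.mono_left nhdsWithin_le_nhds
      · filter_upwards [self_mem_nhdsWithin] with t (ht : α < t)
        have : Real.exp (α - t) < 1 := Real.exp_lt_one_iff.2 (by linarith)
        simpa [Set.mem_Ioi] using by linarith
    have h2 : Tendsto (fun t : ℝ => (1 - Real.exp (α - t))⁻¹) (𝓝[>] α) atTop :=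
      tendsto_inv_nhdsGT_zero.comp h1
    refine h2.congr' ?_
    filter_upwards [self_mem_nhdsWithin] with t (ht : α < t)
    have hr1 : Real.exp (α - t) < 1 := Real.exp_lt_one_iff.2 (by linarith)
    simp_rw [key t]
    rw [tsum_geometric_of_lt_one (Real.exp_nonneg _) hr1]
  · have hset : {t : ℝ | 0 ≤ t ∧ Summable (fun n : ℕ => Real.exp (α * n) * Real.exp (-t * n))}
        = Set.Ioi α := by
      ext t
      simp only [Set.mem_setOf_eq, Set.mem_Ioi]
      have hsumm : Summable (fun n : ℕ => Real.exp (α * n) * Real.exp (-t * n)) ↔ α < t := by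
        simp_rw [key t]
        rw [summable_geometric_iff_norm_lt_one,
          Real.norm_of_nonneg (Real.exp_nonneg _), Real.exp_lt_one_iff]
        constructor <;> intro h <;> linarith
      constructor
      · rintro ⟨-, h⟩; exact hsumm.1 h
      · intro h; exact ⟨by linarith, hsumm.2 h⟩
    rw [hset, csInf_Ioi]
end

section
/- Let A be a unital C*-algebra, E a finitely generated projective right A-Hilbert C*-module with a full right inner product and with a left A-valued pairing. Suppose a positive functional τ : A → ℂ is α-quasi-invariant with respect to E, meaning e^{−α|μ|} τ((ν|μ)_A) = lim_{k→ω₀} τ(_A(μ | ν e^{β_{k−|ν|}}) e^{−β_k}) for all homogeneous μ, ν in the algebraic Fock space of equal degree, where e^{β_k} are the central invertible right Watatani indices. Then τ is a trace: τ((ν|μ)_A a) = τ(a (ν|μ)_A) for all a ∈ A and μ,ν; in particular if E is full as a right module, τ(ab) = τ(ba) for all a, b ∈ A. -/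
/-- If a positive functional `τ` on a unital C*-algebra `A` is `α`-quasi-invariant with
respect to a bi-Hilbertian bimodule structure — i.e.
`e^{−α n} τ((ν|μ)_A) = lim_{k→ω₀} τ(_A(μ | ν e^{β_{k−n}}) e^{−β_k})` for all homogeneous
`μ, ν` of equal degree `n`, where the Watatani indices `e^{β_k}` are central and
invertible — then `τ` is a trace: `τ((ν|μ)_A a) = τ(a (ν|μ)_A)` for all `a, μ, ν`, and
if moreover `E` is full as a right module then `τ(ab) = τ(ba)` for all `a, b ∈ A`. -/
theorem stmt12 {A : Type*} [NormedRing A] [StarRing A] [NormedAlgebra ℂ A]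
    [CompleteSpace A]
    (E : ℕ → Type*)                               -- homogeneous elements of degree n
    (rsmul : ∀ n : ℕ, E n → A → E n)              -- right A-action
    (rip : ∀ n : ℕ, E n → E n → A)                -- right inner product (·|·)_A
    (lip : ∀ n : ℕ, E n → E n → A)                -- left pairing _A(·|·)
    (w winv : ℕ → A)                              -- Watatani indices e^{β_k} and inverses
    (α : ℝ)
    (τ : A →ₗ[ℂ] ℂ) (hτcont : Continuous τ)
    (hτpos : ∀ a : A, 0 ≤ (τ (star a * a)).re)
    (L : (ℕ → ℂ) →ₗ[ℂ] ℂ)                         -- the extended limit ω₀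
    (hrsmul : ∀ (n : ℕ) (μ : E n) (a b : A),
      rsmul n (rsmul n μ a) b = rsmul n μ (a * b))
    (hrip_right : ∀ (n : ℕ) (ν μ : E n) (a : A),
      rip n ν (rsmul n μ a) = rip n ν μ * a)
    (hrip_left : ∀ (n : ℕ) (ν μ : E n) (a : A),
      rip n (rsmul n ν a) μ = star a * rip n ν μ)
    (hlip : ∀ (n : ℕ) (μ ν : E n) (a : A),
      lip n (rsmul n μ a) ν = lip n μ (rsmul n ν (star a)))
    (hw_central : ∀ (k : ℕ) (a : A), w k * a = a * w k)
    (hw_inv : ∀ k : ℕ, w k * winv k = 1 ∧ winv k * w k = 1)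
    (hQI : ∀ (n : ℕ) (μ ν : E n),
      (Real.exp (-α * n) : ℂ) * τ (rip n ν μ)
        = L (fun k => τ (lip n μ (rsmul n ν (w (k - n))) * winv k))) :
    (∀ (n : ℕ) (μ ν : E n) (a : A),
        τ (rip n ν μ * a) = τ (a * rip n ν μ)) ∧
    (Dense ((Submodule.span ℂ {x : A | ∃ μ ν : E 1, x = rip 1 ν μ} : Submodule ℂ A) : Set A) →
      ∀ a b : A, τ (a * b) = τ (b * a)) := by
  have key : ∀ (n : ℕ) (μ ν : E n) (a : A),
      τ (rip n ν μ * a) = τ (a * rip n ν μ) := by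
    intro n μ ν a
    have c_ne : (Real.exp (-α * n) : ℂ) ≠ 0 := by
      exact_mod_cast Real.exp_ne_zero _
    have e1 := hQI n (rsmul n μ a) ν
    have e2 := hQI n μ (rsmul n ν (star a))
    rw [hrip_right] at e1
    rw [hrip_left, star_star] at e2
    have harg : (fun k => τ (lip n (rsmul n μ a) (rsmul n ν (w (k - n))) * winv k))
        = (fun k => τ (lip n μ (rsmul n (rsmul n ν (star a)) (w (k - n))) * winv k)) := by
      funext k
      rw [hlip, hrsmul, hrsmul, hw_central]
    rw [harg] at e1
    exact mul_left_cancel₀ c_ne (e1.trans e2.symm)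
  refine ⟨key, ?_⟩
  intro hdense a b
  have hclosed : IsClosed {x : A | τ (x * a) = τ (a * x)} :=
    isClosed_eq (hτcont.comp (continuous_id.mul continuous_const))
      (hτcont.comp (continuous_const.mul continuous_id))
  have hspan : ∀ x ∈ (Submodule.span ℂ {x : A | ∃ μ ν : E 1, x = rip 1 ν μ}),
      τ (x * a) = τ (a * x) := by
    intro x hx
    induction hx using Submodule.span_induction with
    | mem x hx => obtain ⟨μ, ν, rfl⟩ := hx; exact key 1 μ ν a
    | zero => simp
    | add x y _ _ hx hy => simp [add_mul, mul_add, hx, hy]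
    | smul c x _ hx => simp [smul_mul_assoc, mul_smul_comm, hx]
  have hb : b ∈ closure ((Submodule.span ℂ {x : A | ∃ μ ν : E 1, x = rip 1 ν μ} :
      Submodule ℂ A) : Set A) := by
    rw [hdense.closure_eq]; trivial
  exact (closure_minimal hspan hclosed hb).symm
end

section
/- Let E be a finitely generated projective bi-Hilbertian bimodule over a unital C*-algebra A with right frame (e_j)_{j=1}^N and right Watatani indices e^{β_k} = Σ_{|ρ|=k} {}_A(e_ρ|e_ρ). If a positive trace τ on A is α-quasi-invariant with respect to E (for an extended limit ω₀), then τ satisfies the Laca-Neshveyev condition for α: Σ_j τ((e_j | a e_j)_A) = e^α τ(a) for all a ∈ A. -/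
open Filter Topology

/-- If a positive trace `τ` is `α`-quasi-invariant with respect to an fgp bi-Hilbertian
bimodule `E` with right frame `(e_j)_{j=1}^N` and central invertible Watatani indices
`e^{β_k}` satisfying the frame recursion `Σ_j {}_A(e_j | e_j e^{β_k}) = e^{β_{k+1}}`, then
`τ` satisfies the Laca–Neshveyev condition for `α`:
`Σ_j τ((e_j | a e_j)_A) = e^α τ(a)` for all `a ∈ A`. -/
theorem stmt13 {A : Type*} [Ring A] [Algebra ℂ A] {N : ℕ}
    (E : Type*) (e : Fin N → E)
    (lsmul : A → E → E) (rsmul : E → A → E)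
    (rip lip : E → E → A)
    (w winv : ℕ → A) (hw0 : w 0 = 1)
    (hw_inv : ∀ k : ℕ, w k * winv k = 1 ∧ winv k * w k = 1)
    (hw_central : ∀ (k : ℕ) (a : A), w k * a = a * w k)
    (α : ℝ) (τ : A →ₗ[ℂ] ℂ)
    (L : (ℕ → ℂ) →ₗ[ℂ] ℂ)
    (hL_lim : ∀ f : ℕ → ℂ, Tendsto f atTop (𝓝 0) → L f = 0)
    (hL_const : ∀ c : ℂ, L (fun _ => c) = c)
    (hlip_left : ∀ (a : A) (μ ν : E), lip (lsmul a μ) ν = a * lip μ ν)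
    (hrec : ∀ k : ℕ, (∑ j, lip (e j) (rsmul (e j) (w k))) = w (k + 1))
    (hQI : ∀ μ ν : E,
      (Real.exp (-α) : ℂ) * τ (rip ν μ)
        = L (fun k => τ (lip μ (rsmul ν (w (k - 1))) * winv k))) :
    ∀ a : A, (∑ j, τ (rip (e j) (lsmul a (e j)))) = Real.exp α * τ a := by
  intro a
  set f : ℕ → ℂ := fun k => τ (a * (w (k - 1 + 1) * winv k)) with hf
  have key : ∀ j : Fin N, (Real.exp (-α) : ℂ) * τ (rip (e j) (lsmul a (e j)))
      = L (fun k => τ (a * (lip (e j) (rsmul (e j) (w (k - 1))) * winv k))) := by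
    intro j
    have h := hQI (lsmul a (e j)) (e j)
    simpa [hlip_left, mul_assoc] using h
  have hsum : (Real.exp (-α) : ℂ) * ∑ j, τ (rip (e j) (lsmul a (e j))) = L f := by
    rw [Finset.mul_sum, Finset.sum_congr rfl (fun j _ => key j), ← map_sum]
    congr 1
    funext k
    have h1 : (∑ j, fun k => τ (a * (lip (e j) (rsmul (e j) (w (k - 1))) * winv k))) k
        = ∑ j, τ (a * (lip (e j) (rsmul (e j) (w (k - 1))) * winv k)) := by
      simp [Finset.sum_apply]
    rw [h1, ← map_sum]
    congr 1
    rw [← Finset.mul_sum]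
    congr 1
    rw [← Finset.sum_mul, hrec]
  have hfτ : ∀ k : ℕ, 1 ≤ k → f k = τ a := by
    intro k hk
    have hk1 : k - 1 + 1 = k := Nat.succ_pred_eq_of_pos hk
    rw [hf]
    simp only [hk1]
    rw [(hw_inv k).1, mul_one]
  have hLf : L f = τ a := by
    have h0 : Tendsto (fun k => f k - τ a) atTop (𝓝 0) := by
      have he : (fun k => f k - τ a) =ᶠ[atTop] (fun _ => (0 : ℂ)) := by
        filter_upwards [eventually_ge_atTop 1] with k hk
        rw [hfτ k hk, sub_self]
      exact Tendsto.congr' he.symm tendsto_const_nhds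
    have h1 : L (fun k => f k - τ a) = 0 := hL_lim _ h0
    have h2 : L f - L (fun _ => τ a) = 0 := by
      rw [← h1, ← map_sub]; rfl
    rw [hL_const] at h2
    exact sub_eq_zero.mp h2
  have hfinal : (Real.exp α : ℂ) * ((Real.exp (-α) : ℂ)
      * ∑ j, τ (rip (e j) (lsmul a (e j)))) = (Real.exp α : ℂ) * τ a := by
    rw [hsum, hLf]
  rwa [← mul_assoc, ← Complex.ofReal_mul, ← Real.exp_add, add_neg_cancel,
    Real.exp_zero, Complex.ofReal_one, one_mul] at hfinal
end

section
/- Let G = (V,E) be a finite directed graph with no sources or sinks, Ω_G its one-sided infinite path space, σ_G the shift, and for y ∈ Ω_G let 𝒱_y = {(x,n) : ∃ k ≥ max(0,−n), σ_G^{n+k}(x) = σ_G^k(y)} with κ_G(x,n,y) := min{k ≥ max(0,−n) : σ_G^{n+k}(x) = σ_G^k(y)}. Then for each n ∈ ℤ and k ≥ max(0,−n), the number of pairs (x,n) with κ_G(x,n,y) = k is at most |E|^{n+k} ≤ e^{log|E|(|n|+k)}, and consequently the series Σ_{(x,n) ∈ 𝒱_y} e^{−t(|n| + κ_G(x,n,y))}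 converges for all t > log|E|. -/
open Filter

/-- `x : ℕ → E` is an infinite path in the graph with source and range maps `s, r`. -/
def IsPath {V E : Type*} (s r : E → V) (x : ℕ → E) : Prop :=
  ∀ j : ℕ, s (x j) = r (x (j + 1))

/-- The `k`-fold shift `σ_G^k x` of an infinite path. -/
def shiftPath {E : Type*} (x : ℕ → E) (k : ℕ) : ℕ → E := fun j => x (j + k)

/-- The set `𝒱_y = {(x,n) : ∃ k ≥ max(0,−n), σ_G^{n+k} x = σ_G^k y}` (with `x` an
infinite path). -/
def pathVertexSet {V E : Type*} (s r : E → V) (y : ℕ → E) : Set ((ℕ → E) × ℤ) :=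
  {p | IsPath s r p.1 ∧
    ∃ k : ℕ, -p.2 ≤ (k : ℤ) ∧ shiftPath p.1 (p.2 + (k : ℤ)).toNat = shiftPath y k}

/-- `κ_G(x,n,y) = min {k ≥ max(0,−n) : σ_G^{n+k} x = σ_G^k y}`. -/
noncomputable def kappaG {E : Type*} (y x : ℕ → E) (n : ℤ) : ℕ :=
  sInf {k : ℕ | -n ≤ (k : ℤ) ∧ shiftPath x (n + (k : ℤ)).toNat = shiftPath y k}

/-!
A path `x` with `κ_G(x,n,y) = k` coincides with `y` after its first `n + k` edges, so it is
determined by that prefix and there are at most `|E|^{n+k}` of them. Grouping the series by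
`(n, κ_G)` therefore bounds it by
`∑_{n,k} |E|^{n+k} e^{-t(|n|+k)} ≤ ∑_{n,k} e^{-(t - log|E|)(|n|+k)}`.
-/

theorem summable_comp_of_card_fiber_le {α β : Type*} {f : α → β} {w c : β → ℝ}
    (hw : ∀ b, 0 ≤ w b) (hfin : ∀ b, Finite {a // f a = b})
    (hcard : ∀ b, (Nat.card {a // f a = b} : ℝ) ≤ c b) (hs : Summable fun b => c b * w b) :
    Summable (w ∘ f) := by
  rw [← (Equiv.sigmaFiberEquiv f).summable_iff]
  have hfiber : (w ∘ f) ∘ Equiv.sigmaFiberEquiv f = fun p => w p.1 := by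
    funext ⟨b, a, ha⟩
    simp [Equiv.sigmaFiberEquiv, ha]
  rw [hfiber, summable_sigma_of_nonneg fun p => hw p.1]
  refine ⟨fun b => Summable.of_finite, hs.of_nonneg_of_le (fun b => tsum_nonneg fun _ => hw b)
    fun b => ?_⟩
  rw [tsum_const (β := {a // f a = b}) (w b), nsmul_eq_mul]
  exact mul_le_mul_of_nonneg_right (hcard b) (hw b)

theorem summable_exp_neg_mul_abs_add {ε : ℝ} (hε : 0 < ε) :
    Summable fun q : ℤ × ℕ => Real.exp (-ε * (((|q.1| : ℤ) : ℝ) + q.2)) := by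
  have hnat : Summable fun k : ℕ => Real.exp (-ε * k) := by
    simpa only [mul_comm] using Real.summable_exp_nat_mul_iff.mpr (neg_lt_zero.mpr hε)
  have hint : Summable fun n : ℤ => Real.exp (-ε * ((|n| : ℤ) : ℝ)) :=
    Summable.of_nat_of_neg (by simpa using hnat) (by simpa using hnat)
  simpa only [mul_add, Real.exp_add] using
    hint.mul_of_nonneg hnat (fun _ => Real.exp_nonneg _) fun _ => Real.exp_nonneg _

theorem pow_le_exp_log_mul {c a : ℝ} {m : ℕ} (hc : 1 ≤ c) (hm : (m : ℝ) ≤ a) :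
    c ^ m ≤ Real.exp (Real.log c * a) := by
  calc c ^ m = Real.exp (Real.log c * m) := by
        rw [mul_comm, Real.exp_nat_mul, Real.exp_log (by linarith)]
    _ ≤ Real.exp (Real.log c * a) :=
        Real.exp_le_exp.mpr (mul_le_mul_of_nonneg_left hm (Real.log_nonneg hc))

theorem eq_of_shiftPath_eq_of_forall_lt {E : Type*} {x x' : ℕ → E} {m : ℕ}
    (hshift : shiftPath x m = shiftPath x' m) (hpre : ∀ i < m, x i = x' i) : x = x' := by
  funext j
  rcases lt_or_ge j m with hj | hj
  · exact hpre j hj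
  · simpa [shiftPath, Nat.sub_add_cancel hj] using congrFun hshift (j - m)

section Kappa

variable {V E : Type*} {s r : E → V} {y : ℕ → E}

theorem kappaG_spec {x : ℕ → E} {n : ℤ} (h : (x, n) ∈ pathVertexSet s r y) :
    -n ≤ (kappaG y x n : ℤ) ∧
      shiftPath x (n + (kappaG y x n : ℤ)).toNat = shiftPath y (kappaG y x n) :=
  Nat.sInf_mem h.2

variable (s r y) in
def kappaFiber (n : ℤ) (k : ℕ) : Set (ℕ → E) :=
  {x | (x, n) ∈ pathVertexSet s r y ∧ kappaG y x n = k}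

theorem injOn_restrict_kappaFiber (n : ℤ) (k : ℕ) :
    Set.InjOn (fun x (i : Fin (n + k).toNat) => x i) (kappaFiber s r y n k) := by
  have hshift : ∀ x ∈ kappaFiber s r y n k, shiftPath x (n + k).toNat = shiftPath y k := by
    rintro x ⟨hx, rfl⟩
    exact (kappaG_spec hx).2
  intro x hx x' hx' h
  exact eq_of_shiftPath_eq_of_forall_lt ((hshift x hx).trans (hshift x' hx').symm)
    fun i hi => congrFun h ⟨i, hi⟩

theorem kappaFiber_finite [Finite E] (n : ℤ) (k : ℕ) : (kappaFiber s r y n k).Finite :=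
  Set.Finite.of_finite_image (Set.toFinite _) (injOn_restrict_kappaFiber n k)

theorem card_kappaFiber_le [Fintype E] (n : ℤ) (k : ℕ) :
    Nat.card (kappaFiber s r y n k) ≤ Fintype.card E ^ (n + k).toNat := by
  have hinj := (injOn_restrict_kappaFiber (s := s) (r := r) (y := y) n k).injective
  simpa [Nat.card_eq_fintype_card, Fintype.card_fun] using Nat.card_le_card_of_injective _ hinj

variable (s r y) in
noncomputable def kappaIndex (p : pathVertexSet s r y) : ℤ × ℕ := (p.1.2, kappaG y p.1.1 p.1.2)

def kappaIndexFiberEmbedding (n : ℤ) (k : ℕ) :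
    {p // kappaIndex s r y p = (n, k)} ↪ kappaFiber s r y n k where
  toFun p := ⟨p.1.1.1, by
    obtain ⟨⟨⟨x, n'⟩, hp⟩, hnk⟩ := p
    obtain ⟨rfl, rfl⟩ := Prod.mk.inj hnk
    exact ⟨hp, rfl⟩⟩
  inj' := by
    rintro ⟨⟨⟨x, n₁⟩, _⟩, h₁⟩ ⟨⟨⟨x', n₂⟩, _⟩, h₂⟩ h
    obtain rfl : n₁ = n := (Prod.mk.inj h₁).1
    obtain rfl : n₂ = n₁ := (Prod.mk.inj h₂).1
    obtain rfl : x = x' := congrArg Subtype.val h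
    rfl

end Kappa

theorem toNat_add_le_abs_add (n : ℤ) (k : ℕ) :
    ((n + k).toNat : ℝ) ≤ ((|n| : ℤ) : ℝ) + k := by
  have : ((n + k).toNat : ℤ) ≤ |n| + k := by
    rw [Int.toNat_eq_max]
    exact max_le (by linarith [le_abs_self n]) (by positivity)
  exact_mod_cast this

theorem stmt17_general {V E : Type*} [Fintype E] (s r : E → V)
    (y : ℕ → E) :
    (∀ (n : ℤ) (k : ℕ), -n ≤ (k : ℤ) →
      ({x : ℕ → E | (x, n) ∈ pathVertexSet s r y ∧ kappaG y x n = k}).Finite ∧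
      (Nat.card {x : ℕ → E | (x, n) ∈ pathVertexSet s r y ∧ kappaG y x n = k} : ℝ)
          ≤ (Fintype.card E : ℝ) ^ (n + (k : ℤ)).toNat ∧
      (Fintype.card E : ℝ) ^ (n + (k : ℤ)).toNat
          ≤ Real.exp (Real.log (Fintype.card E) * ((|n| + (k : ℤ) : ℤ) : ℝ))) ∧
    (∀ t : ℝ, Real.log (Fintype.card E) < t →
      Summable (fun p : pathVertexSet s r y =>
        Real.exp (-t * (((|p.1.2| : ℤ) : ℝ) + (kappaG y p.1.1 p.1.2 : ℝ))))) := by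
  have hcard : (1 : ℝ) ≤ Fintype.card E := by
    exact_mod_cast (Fintype.card_pos_iff.mpr ⟨y 0⟩ : 0 < Fintype.card E)
  refine ⟨fun n k _ => ⟨kappaFiber_finite n k, by exact_mod_cast card_kappaFiber_le n k,
    by simpa using pow_le_exp_log_mul hcard (toNat_add_le_abs_add n k)⟩, fun t ht => ?_⟩
  have hfinite (q : ℤ × ℕ) : Finite (kappaFiber s r y q.1 q.2) :=
    (kappaFiber_finite q.1 q.2).to_subtype
  refine summable_comp_of_card_fiber_le (f := kappaIndex s r y)
    (w := fun q : ℤ × ℕ => Real.exp (-t * (((|q.1| : ℤ) : ℝ) + q.2)))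
    (c := fun q => (Fintype.card E : ℝ) ^ (q.1 + q.2).toNat) (fun _ => Real.exp_nonneg _)
    (fun q => Finite.of_injective _ (kappaIndexFiberEmbedding q.1 q.2).injective)
    (fun q => by exact_mod_cast (Nat.card_le_card_of_injective _
      (kappaIndexFiberEmbedding q.1 q.2).injective).trans (card_kappaFiber_le q.1 q.2))
    ((summable_exp_neg_mul_abs_add (sub_pos.mpr ht)).of_nonneg_of_le (fun _ => by positivity)
      fun q => ?_)
  calc (Fintype.card E : ℝ) ^ (q.1 + q.2).toNat * Real.exp (-t * (((|q.1| : ℤ) : ℝ) + q.2))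
      ≤ Real.exp (Real.log (Fintype.card E) * (((|q.1| : ℤ) : ℝ) + q.2)) *
          Real.exp (-t * (((|q.1| : ℤ) : ℝ) + q.2)) :=
        mul_le_mul_of_nonneg_right (pow_le_exp_log_mul hcard (toNat_add_le_abs_add q.1 q.2))
          (Real.exp_nonneg _)
    _ = Real.exp (-(t - Real.log (Fintype.card E)) * (((|q.1| : ℤ) : ℝ) + q.2)) := by
        rw [← Real.exp_add]
        ring_nf

/-- For a finite graph (no sources or sinks) and `y` an infinite path: for each `n ∈ ℤ`
and `k ≥ max(0,−n)` the set of `(x,n) ∈ 𝒱_y` with `κ_G(x,n,y) = k` is finite of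
cardinality at most `|E|^{n+k} ≤ e^{log|E|·(|n|+k)}`, and consequently
`Σ_{(x,n)∈𝒱_y} e^{−t(|n|+κ_G(x,n,y))}` converges for all `t > log|E|`. -/
theorem stmt17 {V E : Type*} [Fintype E] (s r : E → V)
    (hnosource : ∀ v : V, ∃ e : E, r e = v)
    (hnosink : ∀ v : V, ∃ e : E, s e = v)
    (y : ℕ → E) (hy : IsPath s r y) :
    (∀ (n : ℤ) (k : ℕ), -n ≤ (k : ℤ) →
      ({x : ℕ → E | (x, n) ∈ pathVertexSet s r y ∧ kappaG y x n = k}).Finite ∧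
      (Nat.card {x : ℕ → E | (x, n) ∈ pathVertexSet s r y ∧ kappaG y x n = k} : ℝ)
          ≤ (Fintype.card E : ℝ) ^ (n + (k : ℤ)).toNat ∧
      (Fintype.card E : ℝ) ^ (n + (k : ℤ)).toNat
          ≤ Real.exp (Real.log (Fintype.card E) * ((|n| + (k : ℤ) : ℤ) : ℝ))) ∧
    (∀ t : ℝ, Real.log (Fintype.card E) < t →
      Summable (fun p : pathVertexSet s r y =>
        Real.exp (-t * (((|p.1.2| : ℤ) : ℝ) + (kappaG y p.1.1 p.1.2 : ℝ))))) :=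
  stmt17_general s r y
end
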